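/- arXiv:1602.06744 — 8 statements merged into one kernel-verified Lean document; each statement's English description precedes it below -/
import Mathlib

section
/- For the hyperboloid H: x²/a² + y²/a² − z²/c² = 1 with matrix H = diag(a⁻², a⁻², −c⁻², −1) and the sphere S of radius r centered at (x_c, y_c, z_c) with matrix S = [[1,0,0,−x_c],[0,1,0,−y_c],[0,0,1,−z_c],[−x_c,−y_c,−z_c, x_c²+y_c²+z_c²−r²]], the characteristic polynomial f(λ) = det(λH + S) factors as f(λ) = (a² + λ)·g(λ)/(a⁴c²), where g(λ) = −(a² + λ)[(c² − λ)(r² + λ) + z_c²λ] + λ(c² − λ)(x_c² + y_c²). In particular, λ = −a² is always a root of f. -/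
open Matrix

/-- Matrix of the circular hyperboloid of one sheet `x²/a² + y²/a² − z²/c² = 1`. -/
noncomputable def Hmat (a c : ℝ) : Matrix (Fin 4) (Fin 4) ℝ :=
  !![1/a^2, 0, 0, 0; 0, 1/a^2, 0, 0; 0, 0, -(1/c^2), 0; 0, 0, 0, -1]

/-- Matrix of the sphere of radius `r` centered at `(xc, yc, zc)`. -/
noncomputable def Smat (r xc yc zc : ℝ) : Matrix (Fin 4) (Fin 4) ℝ :=
  !![1, 0, 0, -xc; 0, 1, 0, -yc; 0, 0, 1, -zc;
     -xc, -yc, -zc, xc^2 + yc^2 + zc^2 - r^2]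

/-- The characteristic polynomial `f(λ) = det (λ H + S)` as a function of `λ`. -/
noncomputable def fval (a c r xc yc zc l : ℝ) : ℝ :=
  (l • Hmat a c + Smat r xc yc zc).det

/-- The cubic factor `g`. -/
noncomputable def gval (a c r xc yc zc l : ℝ) : ℝ :=
  -(a^2 + l) * ((c^2 - l) * (r^2 + l) + zc^2 * l) + l * (c^2 - l) * (xc^2 + yc^2)

/- λH + S is an arrowhead matrix (diagonal apart from its last row and column), so its
determinant is explicit, and its first two diagonal entries are both 1 + λ/a². Hence every term
of the determinant carries the factor 1 + λ/a², and the cofactor, cleared of denominators,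
is g(λ)/(a²c²). -/

theorem Matrix.det_fin_four_arrowhead {R : Type*} [CommRing R] (d₀ d₁ d₂ e u₀ u₁ u₂ : R) :
    !![d₀, 0, 0, u₀; 0, d₁, 0, u₁; 0, 0, d₂, u₂; u₀, u₁, u₂, e].det =
      d₀ * d₁ * d₂ * e - d₁ * d₂ * u₀ ^ 2 - d₀ * d₂ * u₁ ^ 2 - d₀ * d₁ * u₂ ^ 2 := by
  simp [det_succ_row_zero, Fin.sum_univ_succ, Fin.succAbove]
  ring

theorem smul_Hmat_add_Smat (a c r xc yc zc l : ℝ) :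
    l • Hmat a c + Smat r xc yc zc =
      !![1 + l / a^2, 0, 0, -xc; 0, 1 + l / a^2, 0, -yc; 0, 0, 1 - l / c^2, -zc;
         -xc, -yc, -zc, xc^2 + yc^2 + zc^2 - r^2 - l] := by
  ext i j
  fin_cases i <;> fin_cases j <;> simp [Hmat, Smat] <;> ring

theorem fval_eq (a c r xc yc zc l : ℝ) :
    fval a c r xc yc zc l =
      (1 + l / a^2) * ((1 + l / a^2) * (1 - l / c^2) * (xc^2 + yc^2 + zc^2 - r^2 - l)
        - (1 - l / c^2) * (xc^2 + yc^2) - (1 + l / a^2) * zc^2) := by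
  rw [fval, smul_Hmat_add_Smat, Matrix.det_fin_four_arrowhead]
  ring

theorem stmt0_general (a c r xc yc zc : ℝ) (ha : 0 < a) (hc : 0 < c) :
    (∀ l : ℝ, fval a c r xc yc zc l = (a^2 + l) * gval a c r xc yc zc l / (a^4 * c^2)) ∧
    fval a c r xc yc zc (-a^2) = 0 := by
  have factor (l : ℝ) :
      fval a c r xc yc zc l = (a^2 + l) * gval a c r xc yc zc l / (a^4 * c^2) := by
    rw [fval_eq, gval]
    field_simp
    ring
  exact ⟨factor, by rw [factor]; ring⟩

theorem stmt0 (a c r xc yc zc : ℝ) (ha : 0 < a) (hc : 0 < c) (hr : 0 < r) :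
    (∀ l : ℝ, fval a c r xc yc zc l = (a^2 + l) * gval a c r xc yc zc l / (a^4 * c^2)) ∧
    fval a c r xc yc zc (-a^2) = 0 :=
  stmt0_general a c r xc yc zc ha hc
end

section
/- −a² is a multiple root (multiplicity ≥ 2) of the characteristic polynomial f(λ) = det(λH + S) if and only if x_c = y_c = 0. -/
/-
Clearing the denominators of `H` gives `a⁴c² f(λ) = (λ + a²) g(λ)`, so the multiplicity of `-a²`
as a root of `f` is one more than its multiplicity as a root of `g`. Hence `-a²` is a multiple
root iff `g(-a²) = -a²(a² + c²)(x_c² + y_c²)` vanishes. Root multiplicities in the zero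
polynomial are junk (all `0`), but `f ≠ 0`: its `λ⁴`-coefficient is `det H ≠ 0`.
-/

open Matrix Polynomial

/-- `f(λ) = det (λ H + S)` as a polynomial in `λ`. -/
noncomputable def fpoly (a c r xc yc zc : ℝ) : Polynomial ℝ :=
  ((X : Polynomial ℝ) • (Hmat a c).map C + (Smat r xc yc zc).map C).det

theorem Polynomial.eval_det_X_smul_add_C {R n : Type*} [CommRing R] [Fintype n] [DecidableEq n]
    (A B : Matrix n n R) (x : R) :
    eval x ((X : R[X]) • A.map C + B.map C).det = (x • A + B).det := by
  rw [← coe_evalRingHom, RingHom.map_det, RingHom.mapMatrix_apply]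
  congr 1
  ext i j
  simp only [map_apply, Matrix.add_apply, Matrix.smul_apply, smul_eq_mul, coe_evalRingHom,
    eval_add, eval_mul, eval_X, eval_C]

theorem Polynomial.two_le_rootMultiplicity_mul_X_sub_C_iff {R : Type*} [CommRing R]
    {p : R[X]} {x : R} (hp : p ≠ 0) :
    2 ≤ (p * (X - C x)).rootMultiplicity x ↔ p.IsRoot x := by
  rw [← pow_one (X - C x), rootMultiplicity_mul_X_sub_C_pow hp, ← rootMultiplicity_pos hp]
  omega

theorem det_Hmat (a c : ℝ) : (Hmat a c).det = 1 / (a^4 * c^2) := by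
  simp [Hmat, det_succ_row_zero, Fin.sum_univ_succ]
  ring

theorem fpoly_ne_zero {a c : ℝ} (ha : a ≠ 0) (hc : c ≠ 0) (r xc yc zc : ℝ) :
    fpoly a c r xc yc zc ≠ 0 := by
  have hdet : (Hmat a c).det ≠ 0 := by
    rw [det_Hmat]
    positivity
  intro h
  apply hdet
  rw [← coeff_det_X_add_C_card (Hmat a c) (Smat r xc yc zc), ← fpoly, h, coeff_zero]

noncomputable def gpoly (a c r xc yc zc : ℝ) : ℝ[X] :=
  -(X + C (a^2)) * ((C (c^2) - X) * (C (r^2) + X) + C (zc^2) * X) +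
    X * (C (c^2) - X) * C (xc^2 + yc^2)

theorem eval_fpoly (a c r xc yc zc l : ℝ) :
    (fpoly a c r xc yc zc).eval l = fval a c r xc yc zc l :=
  eval_det_X_smul_add_C _ _ l

theorem fval_eq_mul_gpoly_div {a c : ℝ} (ha : a ≠ 0) (hc : c ≠ 0) (r xc yc zc l : ℝ) :
    fval a c r xc yc zc l = (a^2 + l) * (gpoly a c r xc yc zc).eval l / (a^4 * c^2) := by
  simp [fval, gpoly, Hmat, Smat, det_succ_row_zero, Fin.sum_univ_succ, Fin.succAbove]
  field_simp
  ring

theorem fpoly_eq_C_mul_gpoly_mul_X_sub_C {a c : ℝ} (ha : a ≠ 0) (hc : c ≠ 0) (r xc yc zc : ℝ) :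
    fpoly a c r xc yc zc = C (a^4 * c^2)⁻¹ * gpoly a c r xc yc zc * (X - C (-a^2)) := by
  refine Polynomial.funext fun l ↦ ?_
  rw [eval_fpoly, fval_eq_mul_gpoly_div ha hc]
  simp only [_root_.mul_inv_rev, map_neg, map_pow, sub_neg_eq_add, eval_mul, eval_C, eval_add,
    eval_X, eval_pow]
  ring

theorem eval_neg_sq_gpoly (a c r xc yc zc : ℝ) :
    (gpoly a c r xc yc zc).eval (-a^2) = -a^2 * (a^2 + c^2) * (xc^2 + yc^2) := by
  simp only [gpoly, eval_add, eval_mul, eval_neg, eval_sub, eval_X, eval_C]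
  ring

theorem stmt3_general (a c r xc yc zc : ℝ) (ha : 0 < a) (hc : 0 < c) :
    2 ≤ (fpoly a c r xc yc zc).rootMultiplicity (-a^2) ↔ xc = 0 ∧ yc = 0 := by
  have hf := fpoly_ne_zero ha.ne' hc.ne' r xc yc zc
  rw [fpoly_eq_C_mul_gpoly_mul_X_sub_C ha.ne' hc.ne'] at hf ⊢
  rw [two_le_rootMultiplicity_mul_X_sub_C_iff (left_ne_zero_of_mul hf), IsRoot, eval_mul, eval_C,
    eval_neg_sq_gpoly]
  simp [ha.ne', hc.ne', sq, mul_self_add_mul_self_eq_zero]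

theorem stmt3 (a c r xc yc zc : ℝ) (ha : 0 < a) (hc : 0 < c) (hr : 0 < r) :
    2 ≤ (fpoly a c r xc yc zc).rootMultiplicity (-a^2) ↔ xc = 0 ∧ yc = 0 :=
  stmt3_general a c r xc yc zc ha hc
end

section
/- Suppose x_c = y_c = 0. Then −a² is a triple root of the characteristic polynomial f(λ) = det(λH + S) if and only if r² = a² + a²z_c²/(a² + c²). -/
open Matrix Polynomial

/-! For a centre on the `z`-axis, `f(λ) = (λ + a²)² q(λ) / (a⁴c²)` with
`q(λ) = λ² - (c² + z_c² - r²) λ - c²r²`. As `q` has negative constant term its roots are simple,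
so `-a²` is a triple root of `f` exactly when `q(-a²) = 0`, which is linear in `r²`. -/

/-- A double root `x` would satisfy `2x = s`, hence `x² = -p`. -/
lemma rootMultiplicity_X_sq_sub_C_mul_X_sub_C_le_one {K : Type*} [Field K] [LinearOrder K]
    [IsStrictOrderedRing K] {s p : K} (hp : 0 < p) (x : K) :
    (X ^ 2 - C s * X - C p).rootMultiplicity x ≤ 1 := by
  have hmonic : (X ^ 2 - C s * X - C p).Monic := by monicity!
  by_contra! h
  obtain ⟨hroot, hderiv⟩ := (one_lt_rootMultiplicity_iff_isRoot hmonic.ne_zero).mp h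
  simp only [IsRoot.def, derivative_sub, derivative_X_sq, derivative_C_mul_X, derivative_C,
    eval_sub, eval_mul, eval_pow, eval_X, eval_C, eval_zero] at hroot hderiv
  have hsq : x ^ 2 + p = 0 := by linear_combination x * hderiv - hroot
  linarith [sq_nonneg x]

noncomputable def axisQuadratic (c r zc : ℝ) : ℝ[X] :=
  X ^ 2 - C (c ^ 2 + zc ^ 2 - r ^ 2) * X - C (c ^ 2 * r ^ 2)

lemma fpoly_center_on_axis (a c r zc : ℝ) (ha : a ≠ 0) (hc : c ≠ 0) :
    fpoly a c r 0 0 zc = C (a ^ 4 * c ^ 2)⁻¹ * axisQuadratic c r zc * (X - C (-a ^ 2)) ^ 2 := by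
  refine Polynomial.funext fun x ↦ ?_
  simp [fpoly, Hmat, Smat, axisQuadratic, det_succ_row_zero, Fin.sum_univ_succ]
  field_simp
  ring

lemma axisQuadratic_isRoot_neg_sq_iff {a c r zc : ℝ} (ha : a ≠ 0) :
    (axisQuadratic c r zc).IsRoot (-a ^ 2) ↔ r ^ 2 = a ^ 2 + a ^ 2 * zc ^ 2 / (a ^ 2 + c ^ 2) := by
  have hac : a ^ 2 + c ^ 2 ≠ 0 := by positivity
  simp only [axisQuadratic, IsRoot, eval_sub, eval_pow, eval_X, eval_mul, eval_C]
  rw [← sub_eq_iff_eq_add', eq_div_iff hac]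
  constructor <;> intro h <;> linear_combination -h

theorem stmt4 (a c r zc : ℝ) (ha : 0 < a) (hc : 0 < c) (hr : 0 < r) :
    (fpoly a c r 0 0 zc).rootMultiplicity (-a^2) = 3 ↔
      r^2 = a^2 + a^2 * zc^2 / (a^2 + c^2) := by
  have hq0 : axisQuadratic c r zc ≠ 0 := by
    apply Monic.ne_zero
    unfold axisQuadratic
    monicity!
  have hq1 : (axisQuadratic c r zc).rootMultiplicity (-a ^ 2) ≤ 1 :=
    rootMultiplicity_X_sq_sub_C_mul_X_sub_C_le_one (by positivity) _
  have hscaled : C (a ^ 4 * c ^ 2)⁻¹ * axisQuadratic c r zc ≠ 0 :=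
    mul_ne_zero (C_ne_zero.mpr (by positivity)) hq0
  rw [fpoly_center_on_axis a c r zc ha.ne' hc.ne', rootMultiplicity_mul_X_sub_C_pow hscaled,
    rootMultiplicity_mul hscaled, rootMultiplicity_C, ← axisQuadratic_isRoot_neg_sq_iff ha.ne',
    ← rootMultiplicity_pos hq0]
  omega
end

section
/- Suppose x_c = y_c = 0 and r < a. Then the negative root λ₃ = (c² − r² + z_c² − √((c² − r² + z_c²)² + 4c²r²))/2 of the characteristic polynomial satisfies −a² < λ₃ < 0. (Hint: λ₃ is increasing in z_c², and at z_c = 0 one has λ₃ = −r² > −a².) -/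
/-! For a centred sphere, `f(λ) = (λ/a² + 1)² (λ² - Bλ - c²r²)/c²` with `B = c² - r² + zc²`, and
`λ₃` is the smaller root of the quadratic factor. The product of its roots is `-c²r² < 0`, so
`λ₃ < 0`; the quadratic is positive at `-a²`, which lies left of the vertex `B/2`, so `-a² < λ₃`. -/


open Matrix Polynomial

/-- The smaller root of `x ^ 2 - B * x - P`. -/
noncomputable def smallerRoot (B P : ℝ) : ℝ :=
  (B - √(B ^ 2 + 4 * P)) / 2

lemma smallerRoot_isRoot {B P : ℝ} (hD : 0 ≤ B ^ 2 + 4 * P) :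
    smallerRoot B P ^ 2 - B * smallerRoot B P - P = 0 := by
  unfold smallerRoot
  linear_combination (1 / 4 : ℝ) * Real.sq_sqrt hD

lemma smallerRoot_neg {B P : ℝ} (hP : 0 < P) : smallerRoot B P < 0 := by
  have : B < √(B ^ 2 + 4 * P) := Real.lt_sqrt_of_sq_lt (by linarith)
  unfold smallerRoot
  linarith

lemma lt_smallerRoot {B P x : ℝ} (hx : 2 * x < B) (hq : 0 < x ^ 2 - B * x - P) :
    x < smallerRoot B P := by
  have : √(B ^ 2 + 4 * P) < B - 2 * x := by
    rw [Real.sqrt_lt' (by linarith)]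
    nlinarith
  unfold smallerRoot
  linarith

lemma fval_centered_eq (a c r zc l : ℝ) (ha : a ≠ 0) (hc : c ≠ 0) :
    fval a c r 0 0 zc l
      = (l / a ^ 2 + 1) ^ 2 * ((l ^ 2 - (c ^ 2 - r ^ 2 + zc ^ 2) * l - c ^ 2 * r ^ 2) / c ^ 2) := by
  unfold fval
  simp [Hmat, Smat, Matrix.det_succ_row_zero, Fin.sum_univ_succ]
  field_simp
  ring

theorem stmt10 (a c r zc : ℝ) (ha : 0 < a) (hc : 0 < c) (hr : 0 < r) (hra : r < a) :
    (let l3 : ℝ := (c^2 - r^2 + zc^2 - Real.sqrt ((c^2 - r^2 + zc^2)^2 + 4*c^2*r^2)) / 2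
     fval a c r 0 0 zc l3 = 0 ∧ -a^2 < l3 ∧ l3 < 0) := by
  intro l3
  have hl3 : l3 = smallerRoot (c ^ 2 - r ^ 2 + zc ^ 2) (c ^ 2 * r ^ 2) := by
    simp only [l3, smallerRoot, mul_assoc]
  have hP : 0 < c ^ 2 * r ^ 2 := by positivity
  have hra2 : r ^ 2 < a ^ 2 := pow_lt_pow_left₀ hra hr.le two_ne_zero
  rw [hl3]
  refine ⟨?_, lt_smallerRoot ?_ ?_, smallerRoot_neg hP⟩
  · rw [fval_centered_eq a c r zc _ ha.ne' hc.ne', smallerRoot_isRoot (by positivity)]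
    simp
  · nlinarith [sq_nonneg zc]
  · -- at `-a²` the quadratic equals `a² zc² + (a² + c²)(a² - r²)`
    nlinarith [mul_pos (by positivity : 0 < a ^ 2 + c ^ 2) (sub_pos.mpr hra2),
      mul_nonneg (sq_nonneg a) (sq_nonneg zc)]
end

section
/- Suppose z_c = 0, r² = −c² + c²ρ_c²/(a² + c²), and ρ = a²ρ_c/(a² + c²). Then the normal direction (ρ/a², −z/c²) to the hyperbola ρ²/a² − z²/c² = 1 and the normal direction (ρ − ρ_c, z) to the circle (ρ − ρ_c)² + z² = r² are parallel at any common point (ρ, z); i.e., (ρ/a²)·z − (−z/c²)·(ρ − ρ_c) = 0. -/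
/-! At ρ = a²ρc/(a² + c²) both ρ/a² and (ρc − ρ)/c² equal ρc/(a² + c²), so the determinant
z·(ρ/a² − (ρc − ρ)/c²) of the two normals vanishes for every z. -/

lemma tangency_abscissa_div_sq_eq {a c : ℝ} (ha : a ≠ 0) (hc : c ≠ 0) (ρc : ℝ) :
    a^2 * ρc / (a^2 + c^2) / a^2 = (ρc - a^2 * ρc / (a^2 + c^2)) / c^2 := by
  have hac : a^2 + c^2 ≠ 0 := by positivity
  field_simp
  ring

theorem stmt13_general (a c r ρc : ℝ) (ha : 0 < a) (hc : 0 < c) :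
    ∀ ρ z : ℝ, ρ = a^2 * ρc / (a^2 + c^2) →
      ρ^2 / a^2 - z^2 / c^2 = 1 → (ρ - ρc)^2 + z^2 = r^2 →
      (ρ / a^2) * z - (-(z / c^2)) * (ρ - ρc) = 0 := by
  rintro ρ z rfl - -
  linear_combination z * tangency_abscissa_div_sq_eq ha.ne' hc.ne' ρc

theorem stmt13 (a c r ρc : ℝ) (ha : 0 < a) (hc : 0 < c) (hr : 0 < r) (hρ : 0 < ρc)
    (hrad : r^2 = -c^2 + c^2 * ρc^2 / (a^2 + c^2)) :
    ∀ ρ z : ℝ, ρ = a^2 * ρc / (a^2 + c^2) →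
      ρ^2 / a^2 - z^2 / c^2 = 1 → (ρ - ρc)^2 + z^2 = r^2 →
      (ρ / a^2) * z - (-(z / c^2)) * (ρ - ρc) = 0 :=
  stmt13_general a c r ρc ha hc
end

section
/- Let the sphere of radius r be centered at (ρ_c cos θ, ρ_c sin θ, 0) with ρ_c > a + r. Then the two roots of f besides −a² and c² are λ_± = (ρ_c² − a² − r² ± √((ρ_c² − a² − r²)² − 4a²r²))/2, which are real, positive, and distinct, and λ₊ is strictly increasing while λ₋ is strictly decreasing as functions of ρ_c² on (（a + r)², ∞). -/
open Matrix Polynomial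

/-! For a sphere centred in the plane `z = 0`, `f` splits off the linear factors `c² - λ` and
`λ + a²`; the remaining quadratic `λ² - (ρ² - a² - r²) λ + a² r²`, `ρ² = x_c² + y_c²`, has
discriminant `(ρ² - (a + r)²)(ρ² - (a - r)²)`, positive once `ρ > a + r`, and root product
`a² r²`. Hence `λ₋ = a² r² / λ₊`, so `λ₋` decreases because `λ₊` increases. -/

open Set

theorem fval_eq_mul_quadratic {a c : ℝ} (ha : a ≠ 0) (hc : c ≠ 0) (r xc yc l : ℝ) :
    fval a c r xc yc 0 l =
      -((c^2 - l) * (l + a^2) * (l^2 - (xc^2 + yc^2 - a^2 - r^2) * l + a^2 * r^2)) /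
        (a^4 * c^2) := by
  simp only [fval, Hmat, Smat]
  simp [Matrix.det_succ_row_zero, Fin.sum_univ_succ,
    show (Fin.succAbove (3 : Fin 4) (2 : Fin 3) : Fin 4) = 2 by decide]
  field_simp
  ring

theorem fval_eq_zero_of_quadratic_eq_zero {a c : ℝ} (ha : a ≠ 0) (hc : c ≠ 0) {r xc yc l : ℝ}
    (h : l^2 - (xc^2 + yc^2 - a^2 - r^2) * l + a^2 * r^2 = 0) :
    fval a c r xc yc 0 l = 0 := by
  rw [fval_eq_mul_quadratic ha hc, h, mul_zero, neg_zero, zero_div]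

theorem sq_sub_mul_add_eq_zero_of_eq_half {p q s l : ℝ} (hs : s^2 = p^2 - 4 * q)
    (hl : l = (p + s) / 2 ∨ l = (p - s) / 2) : l^2 - p * l + q = 0 := by
  rcases hl with rfl | rfl <;> linear_combination hs / 4

theorem sub_sqrt_sq_sub_pos {d u : ℝ} (hd : 0 < d) (hu : 0 < u) : 0 < u - √(u^2 - d) := by
  rw [sub_pos, Real.sqrt_lt' hu]
  linarith

theorem sub_sqrt_sq_sub_eq_div {d u : ℝ} (hdu : d ≤ u^2) (hu : 0 < u) :
    u - √(u^2 - d) = d / (u + √(u^2 - d)) := by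
  have hpos : 0 < u + √(u^2 - d) := by positivity
  rw [eq_div_iff hpos.ne']
  linear_combination -Real.sq_sqrt (sub_nonneg.2 hdu)

theorem strictMonoOn_add_sqrt_sq_sub (d : ℝ) :
    StrictMonoOn (fun u : ℝ => u + √(u^2 - d)) (Ici 0) := by
  intro u hu v _ huv
  have : √(u^2 - d) ≤ √(v^2 - d) := Real.sqrt_le_sqrt (by nlinarith [mem_Ici.1 hu])
  simp only
  linarith

theorem strictAntiOn_sub_sqrt_sq_sub {d : ℝ} (hd : 0 < d) :
    StrictAntiOn (fun u : ℝ => u - √(u^2 - d)) (Ici √d) := by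
  have hmem : ∀ u ∈ Ici √d, d ≤ u^2 ∧ 0 < u := fun u hu =>
    have hu0 : 0 < u := (Real.sqrt_pos.2 hd).trans_le hu
    ⟨(Real.sqrt_le_left hu0.le).1 hu, hu0⟩
  intro u hu v hv huv
  obtain ⟨hdu, hu0⟩ := hmem u hu
  obtain ⟨hdv, hv0⟩ := hmem v hv
  simp only [sub_sqrt_sq_sub_eq_div hdu hu0, sub_sqrt_sq_sub_eq_div hdv hv0]
  exact div_lt_div_of_pos_left hd (by positivity)
    (strictMonoOn_add_sqrt_sq_sub d hu0.le hv0.le huv)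

theorem stmt15 (a c r θ ρc : ℝ) (ha : 0 < a) (hc : 0 < c) (hr : 0 < r)
    (hρ : a + r < ρc) :
    (let lp : ℝ := (ρc^2 - a^2 - r^2 + Real.sqrt ((ρc^2 - a^2 - r^2)^2 - 4*a^2*r^2)) / 2
     let lm : ℝ := (ρc^2 - a^2 - r^2 - Real.sqrt ((ρc^2 - a^2 - r^2)^2 - 4*a^2*r^2)) / 2
     fval a c r (ρc * Real.cos θ) (ρc * Real.sin θ) 0 lp = 0 ∧
     fval a c r (ρc * Real.cos θ) (ρc * Real.sin θ) 0 lm = 0 ∧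
     0 ≤ (ρc^2 - a^2 - r^2)^2 - 4*a^2*r^2 ∧ 0 < lm ∧ lm < lp) ∧
    StrictMonoOn
      (fun s : ℝ => (s - a^2 - r^2 + Real.sqrt ((s - a^2 - r^2)^2 - 4*a^2*r^2)) / 2)
      (Set.Ioi ((a + r)^2)) ∧
    StrictAntiOn
      (fun s : ℝ => (s - a^2 - r^2 - Real.sqrt ((s - a^2 - r^2)^2 - 4*a^2*r^2)) / 2)
      (Set.Ioi ((a + r)^2)) := by
  have hd : 0 < 4*a^2*r^2 := by positivity
  have hsqrt_d : √(4*a^2*r^2) = 2*a*r := by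
    rw [show 4*a^2*r^2 = (2*a*r)^2 by ring, Real.sqrt_sq (by positivity)]
  have hshift : ∀ s ∈ Ioi ((a + r)^2), √(4*a^2*r^2) < s - a^2 - r^2 := fun s hs => by
    rw [hsqrt_d]; nlinarith [mem_Ioi.1 hs]
  have hu := hshift (ρc^2) (pow_lt_pow_left₀ hρ (by positivity) two_ne_zero)
  have hu0 : 0 < ρc^2 - a^2 - r^2 := (Real.sqrt_nonneg _).trans_lt hu
  have hD : 0 < (ρc^2 - a^2 - r^2)^2 - 4*a^2*r^2 := sub_pos.2 ((Real.sqrt_lt' hu0).1 hu)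
  have hρ2 : (ρc * Real.cos θ)^2 + (ρc * Real.sin θ)^2 = ρc^2 := by
    linear_combination ρc^2 * Real.cos_sq_add_sin_sq θ
  have hroot : ∀ l, l = (ρc^2 - a^2 - r^2 + √((ρc^2 - a^2 - r^2)^2 - 4*a^2*r^2)) / 2 ∨
      l = (ρc^2 - a^2 - r^2 - √((ρc^2 - a^2 - r^2)^2 - 4*a^2*r^2)) / 2 →
      fval a c r (ρc * Real.cos θ) (ρc * Real.sin θ) 0 l = 0 := fun l hl =>
    fval_eq_zero_of_quadratic_eq_zero ha.ne' hc.ne' <| by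
      rw [hρ2]; exact sq_sub_mul_add_eq_zero_of_eq_half (by rw [Real.sq_sqrt hD.le]; ring) hl
  refine ⟨⟨hroot _ (Or.inl rfl), hroot _ (Or.inr rfl), hD.le, ?_, ?_⟩, ?_, ?_⟩
  · linarith [sub_sqrt_sq_sub_pos hd hu0]
  · linarith [Real.sqrt_pos.2 hD]
  · intro x hx y hy hxy
    have := strictMonoOn_add_sqrt_sq_sub (4*a^2*r^2) ((Real.sqrt_nonneg _).trans (hshift x hx).le)
      ((Real.sqrt_nonneg _).trans (hshift y hy).le) (by linarith : x - a^2 - r^2 < y - a^2 - r^2)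
    simp only at this ⊢
    linarith
  · intro x hx y hy hxy
    have := strictAntiOn_sub_sqrt_sq_sub hd (hshift x hx).le (hshift y hy).le
      (by linarith : x - a^2 - r^2 < y - a^2 - r^2)
    simp only at this ⊢
    linarith
end

section
/- Let H, S be real symmetric 4×4 matrices with H invertible. Suppose there exists a nonzero real vector X₀ and α₀ ∈ ℝ with X₀ᵗHX₀ = 0, X₀ᵗSX₀ = 0, and SX₀ = −α₀HX₀ (tangency). If det(λH + S), viewed as a polynomial of degree 4 in λ, has four distinct roots (all real, or two real and two complex conjugate), then a contradiction follows; hence det(λH + S) must have a multiple root. -/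
/-!
Write `M(λ) = λH + S` and `p = λ - α₀`. Tangency says `M(λ) X₀ = p · H X₀`, so by symmetry both
the column `M X₀` and the row `X₀ᵗ M` are divisible by `p`, while `X₀ᵗ M X₀ = p · X₀ᵗ H X₀ = 0`.
In a basis whose `k`-th vector is `X₀`, the matrix of `M` therefore has its `k`-th row and column
divisible by `p` and a vanishing diagonal entry; every term of the Leibniz expansion then either
contains that entry or picks up `p` twice, so `p² ∣ det M`. As `det M` has leading coefficient `det H ≠ 0`, `α₀` is a multiple root.
-/

open Matrix Polynomial

namespace Matrix

variable {n R : Type*} [Fintype n] [CommRing R]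

theorem X_smul_map_add_map_mulVec_of_mulVec_eq {H S : Matrix n n R} {x : n → R} {a : R}
    (hSx : S *ᵥ x = -a • H *ᵥ x) :
    ((X : R[X]) • H.map C + S.map C) *ᵥ (fun i => C (x i)) =
      fun i => (X - C a) * C ((H *ᵥ x) i) := by
  funext i
  have hC : ∀ M : Matrix n n R, (M.map C *ᵥ fun j => C (x j)) i = C ((M *ᵥ x) i) := fun M =>
    (RingHom.map_mulVec C M x i).symm
  simp only [add_mulVec, smul_mulVec, Pi.add_apply, Pi.smul_apply, hC, hSx, smul_eq_mul,
    map_neg, map_mul]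
  ring

variable [DecidableEq n]

theorem det_X_smul_map_add_map_ne_zero {H : Matrix n n R} (hH : H.det ≠ 0) (S : Matrix n n R) :
    ((X : R[X]) • H.map C + S.map C).det ≠ 0 :=
  fun h0 => hH (by rw [← coeff_det_X_add_C_card H S, h0, coeff_zero])

theorem sq_dvd_det_of_dvd_row_of_dvd_col (A : Matrix n n R) {p : R} (k : n)
    (hrow : ∀ j, p ∣ A k j) (hcol : ∀ i, p ∣ A i k) (hkk : p ^ 2 ∣ A k k) :
    p ^ 2 ∣ A.det := by
  rw [det_apply]
  refine Finset.dvd_sum fun σ _ => ?_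
  rw [Units.smul_def, zsmul_eq_mul]
  refine Dvd.dvd.mul_left ?_ _
  by_cases hσ : σ k = k
  · have := Finset.dvd_prod_of_mem (fun i => A (σ i) i) (Finset.mem_univ k)
    rw [hσ] at this
    exact hkk.trans this
  · rw [← σ.eq_symm_apply] at hσ
    calc p ^ 2 ∣ A (σ k) k * A (σ (σ.symm k)) (σ.symm k) := by
          rw [sq, σ.apply_symm_apply]; exact mul_dvd_mul (hcol _) (hrow _)
      _ = ∏ i ∈ {k, σ.symm k}, A (σ i) i :=
          (Finset.prod_pair (f := fun i => A (σ i) i) hσ).symm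
      _ ∣ ∏ i, A (σ i) i := Finset.prod_dvd_prod_of_subset _ _ _ (Finset.subset_univ _)

theorem det_one_updateCol (k : n) (v : n → R) :
    ((1 : Matrix n n R).updateCol k v).det = v k := by
  simpa [one_apply] using det_updateCol_sum (1 : Matrix n n R) k v

theorem sq_dvd_det_of_dvd_mulVec (A : Matrix n n R) {p : R} (v : n → R) (k : n)
    (hv : IsUnit (v k)) (hAv : ∀ i, p ∣ (A *ᵥ v) i) (hvA : ∀ j, p ∣ (v ᵥ* A) j)
    (hvAv : p ^ 2 ∣ v ⬝ᵥ (A *ᵥ v)) : p ^ 2 ∣ A.det := by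
  set P := (1 : Matrix n n R).updateCol k v
  have hAP : ∀ i, (A * P) i k = (A *ᵥ v) i := fun i => by
    simp [P, mul_apply, mulVec, dotProduct]
  have hPA : ∀ j, (Pᵀ * A) k j = (v ᵥ* A) j := fun j => by
    simp [P, mul_apply, vecMul, dotProduct]
  have hB : p ^ 2 ∣ (Pᵀ * A * P).det := by
    refine sq_dvd_det_of_dvd_row_of_dvd_col _ k (fun j => ?_) (fun i => ?_) ?_
    · rw [mul_apply]
      exact Finset.dvd_sum fun l _ => (hPA l ▸ hvA l).mul_right _
    · rw [Matrix.mul_assoc, mul_apply]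
      exact Finset.dvd_sum fun l _ => (hAP l ▸ hAv l).mul_left _
    · have hkk : (Pᵀ * A * P) k k = v ᵥ* A ⬝ᵥ v := by
        simp [mul_apply, hPA, P, dotProduct]
      rwa [hkk, ← dotProduct_mulVec]
  rwa [det_mul, det_mul, det_transpose, det_one_updateCol, mul_comm, ← mul_assoc,
    (hv.mul hv).dvd_mul_left] at hB

theorem X_sub_C_sq_dvd_det_X_smul_map_add_map {K : Type*} [Field K] {H S : Matrix n n K}
    (hH : H.IsSymm) (hS : S.IsSymm) {x : n → K} (hx : x ≠ 0) {a : K}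
    (hHx : x ⬝ᵥ H *ᵥ x = 0) (hSx : S *ᵥ x = -a • H *ᵥ x) :
    (X - C a) ^ 2 ∣ ((X : K[X]) • H.map C + S.map C).det := by
  obtain ⟨k, hk⟩ := Function.ne_iff.mp hx
  have hsymm : ((X : K[X]) • H.map C + S.map C).IsSymm := ((hH.map C).smul X).add (hS.map C)
  have hMv := X_smul_map_add_map_mulVec_of_mulVec_eq hSx
  refine sq_dvd_det_of_dvd_mulVec _ (fun i => C (x i)) k (isUnit_C.mpr (Ne.isUnit hk)) (fun i => ?_)
    (fun j => ?_) ?_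
  · rw [hMv]
    exact dvd_mul_right _ _
  · rw [← mulVec_transpose, hsymm.eq, hMv]
    exact dvd_mul_right _ _
  · have hvMv : (fun i => C (x i)) ⬝ᵥ (fun i => (X - C a) * C ((H *ᵥ x) i)) =
        (X - C a) * C (x ⬝ᵥ H *ᵥ x) := by
      simp only [dotProduct, map_sum, map_mul, Finset.mul_sum]
      exact Finset.sum_congr rfl fun i _ => by ring
    rw [hMv, hvMv, hHx, map_zero, mul_zero]
    exact dvd_zero _

end Matrix

theorem stmt18_general (H S : Matrix (Fin 4) (Fin 4) ℝ) (hH : H.IsSymm) (hS : S.IsSymm)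
    (hHinv : IsUnit H.det)
    (X₀ : Fin 4 → ℝ) (hX₀ : X₀ ≠ 0) (α₀ : ℝ)
    (htanH : X₀ ⬝ᵥ H.mulVec X₀ = 0)
    (htan : S.mulVec X₀ = -α₀ • H.mulVec X₀) :
    ∃ μ : ℂ,
      2 ≤ ((((X : Polynomial ℝ) • H.map C + S.map C).det).map
            (algebraMap ℝ ℂ)).rootMultiplicity μ := by
  have hdet := det_X_smul_map_add_map_ne_zero hHinv.ne_zero S
  have hdvd := X_sub_C_sq_dvd_det_X_smul_map_add_map hH hS hX₀ htanH htan
  exact ⟨algebraMap ℝ ℂ α₀, ((le_rootMultiplicity_iff hdet).mpr hdvd).trans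
    (le_rootMultiplicity_map (map_ne_zero hdet) α₀)⟩

theorem stmt18 (H S : Matrix (Fin 4) (Fin 4) ℝ) (hH : H.IsSymm) (hS : S.IsSymm)
    (hHinv : IsUnit H.det)
    (X₀ : Fin 4 → ℝ) (hX₀ : X₀ ≠ 0) (α₀ : ℝ)
    (htanH : X₀ ⬝ᵥ H.mulVec X₀ = 0) (htanS : X₀ ⬝ᵥ S.mulVec X₀ = 0)
    (htan : S.mulVec X₀ = -α₀ • H.mulVec X₀) :
    ∃ μ : ℂ,
      2 ≤ ((((X : Polynomial ℝ) • H.map C + S.map C).det).map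
            (algebraMap ℝ ℂ)).rootMultiplicity μ :=
  stmt18_general H S hH hS hHinv X₀ hX₀ α₀ htanH htan
end

section
/- Let the sphere of radius r < 2a be centered at (a, 0, 0). Then the roots of f(λ) = det(λH + S) are −a², c², and λ_± = (−r² ± r√(r² − 4a²))/2; in particular λ_± are non-real complex conjugates. -/
/-!
With the centre `(a, 0, 0)` on the hyperboloid, the `y`- and `z`-coordinates decouple in
`λH + S`, contributing the factors `λ/a² + 1` and `1 - λ/c²`; the remaining `2 × 2` block in
the `x`- and homogenising coordinates has determinant `-(λ² + r²λ + a²r²)/a²`. The discriminant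
of this quadratic is `r²(r² - 4a²) < 0` for `r < 2a`, so its roots are a non-real conjugate pair.
-/

open Matrix Polynomial

theorem eval_fpoly_center (a c r l : ℝ) : (fpoly a c r a 0 0).eval l =
    (l / a ^ 2 + 1) * (1 - l / c ^ 2) * ((l / a ^ 2 + 1) * (a ^ 2 - r ^ 2 - l) - a ^ 2) := by
  simp [fpoly, Hmat, Smat, det_succ_row_zero, Fin.sum_univ_succ, Fin.succAbove]
  ring

theorem fpoly_center_eq (a c r : ℝ) (ha : a ≠ 0) (hc : c ≠ 0) :
    fpoly a c r a 0 0 = C (a ^ 4 * c ^ 2)⁻¹ *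
      ((X + C (a ^ 2)) * (X - C (c ^ 2)) * (X ^ 2 + C (r ^ 2) * X + C (a ^ 2 * r ^ 2))) := by
  refine Polynomial.funext fun l => ?_
  rw [eval_fpoly_center]
  simp only [eval_mul, eval_C, eval_add, eval_X, eval_sub, eval_pow]
  field_simp
  ring

theorem eval_map_fpoly_center (a c r : ℝ) (ha : a ≠ 0) (hc : c ≠ 0) (z : ℂ) :
    ((fpoly a c r a 0 0).map (algebraMap ℝ ℂ)).eval z = ((a : ℂ) ^ 4 * c ^ 2)⁻¹ *
      ((z + a ^ 2) * (z - c ^ 2) * (z ^ 2 + r ^ 2 * z + a ^ 2 * r ^ 2)) := by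
  simp [fpoly_center_eq a c r ha hc]

theorem quadratic_eq_zero_of_eq_root (a r : ℝ) (h : 0 ≤ 4 * a ^ 2 - r ^ 2) (z : ℂ)
    (hz : z = (-(r ^ 2 : ℂ) + r * Complex.I * √(4 * a ^ 2 - r ^ 2)) / 2 ∨
      z = (-(r ^ 2 : ℂ) - r * Complex.I * √(4 * a ^ 2 - r ^ 2)) / 2) :
    z ^ 2 + r ^ 2 * z + a ^ 2 * r ^ 2 = 0 := by
  have hsqrt : ((√(4 * a ^ 2 - r ^ 2) : ℝ) : ℂ) ^ 2 = 4 * a ^ 2 - r ^ 2 := by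
    rw [← Complex.ofReal_pow, Real.sq_sqrt h]
    push_cast
    ring
  have hdisc : discrim 1 ((r : ℂ) ^ 2) (a ^ 2 * r ^ 2) =
      (r * Complex.I * √(4 * a ^ 2 - r ^ 2)) * (r * Complex.I * √(4 * a ^ 2 - r ^ 2)) := by
    rw [discrim]
    linear_combination (-(r : ℂ) ^ 2 * √(4 * a ^ 2 - r ^ 2) ^ 2) * Complex.I_sq
      + (r : ℂ) ^ 2 * hsqrt
  linear_combination (quadratic_eq_zero_iff one_ne_zero hdisc z).mpr (by simpa using hz)

theorem stmt19 (a c r : ℝ) (ha : 0 < a) (hc : 0 < c) (hr : 0 < r) (hr2a : r < 2*a) :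
    (let P : Polynomial ℂ := (fpoly a c r a 0 0).map (algebraMap ℝ ℂ)
     let lp : ℂ := (-(r^2 : ℂ) + r * Complex.I * Real.sqrt (4*a^2 - r^2)) / 2
     let lm : ℂ := (-(r^2 : ℂ) - r * Complex.I * Real.sqrt (4*a^2 - r^2)) / 2
     P.eval (-(a^2 : ℂ)) = 0 ∧ P.eval ((c^2 : ℂ)) = 0 ∧
     P.eval lp = 0 ∧ P.eval lm = 0 ∧
     lp.im ≠ 0 ∧ lm = (starRingEnd ℂ) lp) := by
  intro P lp lm
  have hP := eval_map_fpoly_center a c r ha.ne' hc.ne'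
  have hpos : 0 < 4 * a ^ 2 - r ^ 2 := by nlinarith
  have hroot := quadratic_eq_zero_of_eq_root a r hpos.le
  refine ⟨by simp [P, hP], by simp [P, hP], by simp [P, hP, hroot lp (.inl rfl)],
    by simp [P, hP, hroot lm (.inr rfl)], ?_, ?_⟩
  · have him : lp.im = r * √(4 * a ^ 2 - r ^ 2) / 2 := by
      simp [lp, ← Complex.ofReal_pow]
    rw [him]
    positivity
  · simp [lp, lm, Complex.conj_I, map_ofNat, ← Complex.ofReal_pow]
    ring
end
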